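/- The limit as r → ∞ of ψ₁(r)/ψ₂(r) equals 1/(ε(c-ε)). -/

import Mathlib

open MeasureTheory Real Filter

/-- `ψ₁ c ε r = ∫₀^r e^{c s²/2} (∫_s^∞ e^{-(c-ε) u²/2} du) ds`. -/
noncomputable def psi1 (c ε r : ℝ) : ℝ :=
  ∫ s in (0:ℝ)..r, Real.exp (c * s ^ 2 / 2) * ∫ u in Set.Ioi s, Real.exp (-(c - ε) * u ^ 2 / 2)

/-- `ψ₂ ε r = (e^{ε r²/2} - 1)/(r(1+r))`. -/
noncomputable def psi2 (ε r : ℝ) : ℝ :=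
  (Real.exp (ε * r ^ 2 / 2) - 1) / (r * (1 + r))

/-!
Write `a = c - ε`. By l'Hôpital's rule (0/0 form) the Gaussian tail satisfies
`∫_r^∞ e^{-a u²/2} du ~ e^{-a r²/2}/(a r)`, hence `ψ₁'(r) ~ e^{ε r²/2}/(a r) ~ Φ'(r)/(ε a)`
for `Φ(r) = e^{ε r²/2}/r²`. Since `Φ → ∞`, the ∞/∞ form of l'Hôpital's rule gives
`ψ₁/Φ → 1/(ε a)`, and `Φ/ψ₂ → 1`.
-/

open Set Topology

theorem eventually_div_lt_of_hasDerivAt_of_tendsto_atTop {F G f g : ℝ → ℝ} {M U : ℝ}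
    (hF : ∀ᶠ x in atTop, HasDerivAt F (f x) x) (hG : ∀ᶠ x in atTop, HasDerivAt G (g x) x)
    (hg : ∀ᶠ x in atTop, 0 < g x) (hGtop : Tendsto G atTop atTop)
    (hfg : ∀ᶠ x in atTop, f x / g x < M) (hMU : M < U) :
    ∀ᶠ x in atTop, F x / G x < U := by
  obtain ⟨R, hR⟩ := eventually_atTop.mp (hF.and (hG.and (hg.and hfg)))
  -- `F - M G` is antitone beyond `R`, so `F / G ≤ M + (F R - M G R) / G` there.
  have hanti : AntitoneOn (fun x => F x - M * G x) (Ici R) := by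
    refine antitoneOn_of_hasDerivWithinAt_nonpos (convex_Ici R) ?_ ?_ ?_
      (f' := fun x => f x - M * g x)
    · exact fun x hx =>
        ((hR x hx).1.sub ((hR x hx).2.1.const_mul M)).continuousAt.continuousWithinAt
    · intro x hx
      rw [interior_Ici] at hx
      exact ((hR x hx.le).1.sub ((hR x hx.le).2.1.const_mul M)).hasDerivWithinAt
    · intro x hx
      rw [interior_Ici] at hx
      obtain ⟨-, -, hgx, hfgx⟩ := hR x hx.le
      rw [div_lt_iff₀ hgx] at hfgx
      linarith
  have hsmall : Tendsto (fun x => (F R - M * G R) / G x) atTop (𝓝 0) :=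
    tendsto_const_nhds.div_atTop hGtop
  filter_upwards [eventually_ge_atTop R, hGtop.eventually_gt_atTop 0,
    hsmall.eventually (gt_mem_nhds (sub_pos.mpr hMU))] with x hxR hGx hsmallx
  have hHx : F x - M * G x ≤ F R - M * G R := hanti self_mem_Ici hxR hxR
  calc F x / G x = M + (F x - M * G x) / G x := by field_simp; ring
    _ ≤ M + (F R - M * G R) / G x := by gcongr
    _ < U := by linarith

theorem lhopital_atTop_of_tendsto_atTop {F G f g : ℝ → ℝ} {L : ℝ}
    (hF : ∀ᶠ x in atTop, HasDerivAt F (f x) x) (hG : ∀ᶠ x in atTop, HasDerivAt G (g x) x)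
    (hg : ∀ᶠ x in atTop, 0 < g x) (hGtop : Tendsto G atTop atTop)
    (hfg : Tendsto (fun x => f x / g x) atTop (𝓝 L)) :
    Tendsto (fun x => F x / G x) atTop (𝓝 L) := by
  refine tendsto_order.2 ⟨fun V hVL => ?_, fun U hLU => ?_⟩
  · obtain ⟨M, hVM, hML⟩ := exists_between hVL
    have hneg : ∀ᶠ x in atTop, -F x / G x < -V := by
      refine eventually_div_lt_of_hasDerivAt_of_tendsto_atTop (hF.mono fun x hx => hx.neg) hG hg
        hGtop (((tendsto_order.1 hfg).1 M hML).mono fun x hx => ?_) (neg_lt_neg hVM)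
      rw [neg_div]; exact neg_lt_neg hx
    filter_upwards [hneg] with x hx
    rw [neg_div] at hx; exact neg_lt_neg_iff.mp hx
  · obtain ⟨M, hLM, hMU⟩ := exists_between hLU
    exact eventually_div_lt_of_hasDerivAt_of_tendsto_atTop hF hG hg hGtop
      ((tendsto_order.1 hfg).2 M hLM) hMU

section TailIntegral

variable {E : Type*} [NormedAddCommGroup E] [NormedSpace ℝ E] {h : ℝ → E}

theorem integral_Ioi_eq_sub_intervalIntegral (hi : Integrable h) (s : ℝ) :
    ∫ u in Ioi s, h u = (∫ u in Ioi 0, h u) - ∫ u in 0..s, h u := by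
  rw [← intervalIntegral.integral_Ioi_sub_Ioi' hi.integrableOn hi.integrableOn, sub_sub_cancel]

theorem continuous_integral_Ioi (hi : Integrable h) : Continuous fun s => ∫ u in Ioi s, h u := by
  rw [funext (integral_Ioi_eq_sub_intervalIntegral hi)]
  exact continuous_const.sub
    (intervalIntegral.continuous_primitive (fun _ _ => hi.intervalIntegrable) 0)

theorem hasDerivAt_integral_Ioi [CompleteSpace E] (hc : Continuous h) (hi : Integrable h) (s : ℝ) :
    HasDerivAt (fun s => ∫ u in Ioi s, h u) (-h s) s := by
  rw [funext (integral_Ioi_eq_sub_intervalIntegral hi)]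
  exact ((hc.integral_hasStrictDerivAt 0 s).hasDerivAt).const_sub _

theorem tendsto_integral_Ioi_atTop [CompleteSpace E] (hi : Integrable h) :
    Tendsto (fun s => ∫ u in Ioi s, h u) atTop (𝓝 0) := by
  rw [funext (integral_Ioi_eq_sub_intervalIntegral hi)]
  simpa using (intervalIntegral_tendsto_integral_Ioi 0 hi.integrableOn tendsto_id).const_sub
    (∫ u in Ioi 0, h u)

end TailIntegral

theorem integrable_exp_neg_mul_sq_div_two {a : ℝ} (ha : 0 < a) :
    Integrable fun u : ℝ => exp (-a * u ^ 2 / 2) := by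
  simpa only [neg_mul, neg_div, mul_div_right_comm] using integrable_exp_neg_mul_sq (half_pos ha)

theorem hasDerivAt_exp_mul_sq_div_two (b x : ℝ) :
    HasDerivAt (fun u => exp (b * u ^ 2 / 2)) (b * x * exp (b * x ^ 2 / 2)) x := by
  have := (((hasDerivAt_pow 2 x).const_mul b).div_const 2).exp
  convert this using 1
  ring

theorem eventually_lt_mul_sq {b : ℝ} (hb : 0 < b) (C : ℝ) : ∀ᶠ r : ℝ in atTop, C < b * r ^ 2 :=
  ((tendsto_pow_atTop two_ne_zero).const_mul_atTop hb).eventually_gt_atTop C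

theorem tendsto_exp_neg_mul_sq_div_two {a : ℝ} (ha : 0 < a) :
    Tendsto (fun u : ℝ => exp (-a * u ^ 2 / 2)) atTop (𝓝 0) := by
  refine (tendsto_exp_neg_atTop_nhds_zero.comp
    (((tendsto_pow_atTop two_ne_zero).const_mul_atTop ha).atTop_div_const two_pos)).congr
    fun u => ?_
  simp only [Function.comp_apply, neg_mul, neg_div]

theorem tendsto_mul_exp_mul_integral_Ioi_exp_neg_mul_sq {a : ℝ} (ha : 0 < a) :
    Tendsto (fun s => s * exp (a * s ^ 2 / 2) * ∫ u in Ioi s, exp (-a * u ^ 2 / 2))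
      atTop (𝓝 (1 / a)) := by
  have hint := integrable_exp_neg_mul_sq_div_two ha
  have hcont : Continuous fun u : ℝ => exp (-a * u ^ 2 / 2) := by fun_prop
  have hden : ∀ x ≠ 0, HasDerivAt (fun s => s⁻¹ * exp (-a * s ^ 2 / 2))
      (-(x⁻¹ ^ 2 + a) * exp (-a * x ^ 2 / 2)) x := fun x hx => by
    refine (((hasDerivAt_id x).inv hx).mul (hasDerivAt_exp_mul_sq_div_two (-a) x)).congr_deriv ?_
    simp only [Pi.inv_apply, id]
    field_simp
    ring
  have hden_lim : Tendsto (fun s : ℝ => s⁻¹ * exp (-a * s ^ 2 / 2)) atTop (𝓝 0) := by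
    simpa using tendsto_inv_atTop_zero.mul (tendsto_exp_neg_mul_sq_div_two ha)
  have hratio : Tendsto
      (fun s : ℝ => -exp (-a * s ^ 2 / 2) / (-(s⁻¹ ^ 2 + a) * exp (-a * s ^ 2 / 2)))
      atTop (𝓝 (1 / a)) := by
    have := ((tendsto_inv_atTop_zero.pow 2).add_const a).inv₀ (by positivity : (0:ℝ) ^ 2 + a ≠ 0)
    refine (by simpa using this : Tendsto (fun s : ℝ => (s⁻¹ ^ 2 + a)⁻¹) atTop (𝓝 (1 / a))).congr
      fun s => ?_
    have : s⁻¹ ^ 2 + a ≠ 0 := by positivity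
    field_simp
  refine (HasDerivAt.lhopital_zero_atTop (.of_forall (hasDerivAt_integral_Ioi hcont hint))
    ((eventually_ne_atTop 0).mono hden) ?_ (tendsto_integral_Ioi_atTop hint) hden_lim
    hratio).congr' ?_
  · filter_upwards with x
    exact mul_ne_zero (neg_ne_zero.2 (by positivity)) (exp_pos _).ne'
  · filter_upwards [eventually_gt_atTop 0] with x hx
    rw [neg_mul, neg_div, exp_neg]
    field_simp

theorem hasDerivAt_exp_mul_sq_div_two_div_sq (b : ℝ) {x : ℝ} (hx : x ≠ 0) :
    HasDerivAt (fun r => exp (b * r ^ 2 / 2) / r ^ 2)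
      (exp (b * x ^ 2 / 2) * (b * x ^ 2 - 2) / x ^ 3) x := by
  refine ((hasDerivAt_exp_mul_sq_div_two b x).div (hasDerivAt_pow 2 x)
    (by positivity)).congr_deriv ?_
  field_simp
  ring

theorem tendsto_exp_mul_sq_div_two_div_sq_atTop {b : ℝ} (hb : 0 < b) :
    Tendsto (fun r => exp (b * r ^ 2 / 2) / r ^ 2) atTop atTop := by
  have hy : Tendsto (fun r : ℝ => b * r ^ 2 / 2) atTop atTop :=
    ((tendsto_pow_atTop two_ne_zero).const_mul_atTop hb).atTop_div_const two_pos
  refine (((tendsto_exp_div_pow_atTop 1).comp hy).const_mul_atTop (half_pos hb)).congr' ?_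
  filter_upwards [eventually_gt_atTop 0] with r hr
  simp only [Function.comp_apply, pow_one]
  field_simp

theorem tendsto_sq_div_mul_sq_sub_two {b : ℝ} (hb : 0 < b) :
    Tendsto (fun r : ℝ => r ^ 2 / (b * r ^ 2 - 2)) atTop (𝓝 (1 / b)) := by
  have : Tendsto (fun r : ℝ => (b - 2 * r⁻¹ ^ 2)⁻¹) atTop (𝓝 (1 / b)) := by
    simpa using ((tendsto_inv_atTop_zero.pow 2).const_mul 2).const_sub b |>.inv₀
      (by simpa using hb.ne')
  refine this.congr' ?_
  filter_upwards [eventually_gt_atTop 0] with r hr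
  field_simp

theorem hasDerivAt_psi1 {c ε : ℝ} (hεc : ε < c) (r : ℝ) :
    HasDerivAt (psi1 c ε) (exp (c * r ^ 2 / 2) * ∫ u in Ioi r, exp (-(c - ε) * u ^ 2 / 2)) r := by
  have hint := integrable_exp_neg_mul_sq_div_two (sub_pos.2 hεc)
  have hcont : Continuous fun s : ℝ => exp (c * s ^ 2 / 2) := by fun_prop
  exact ((hcont.mul (continuous_integral_Ioi hint)).integral_hasStrictDerivAt 0 r).hasDerivAt

theorem tendsto_deriv_psi1_div_deriv {c ε : ℝ} (hε : 0 < ε) (hεc : ε < c) :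
    Tendsto (fun r => exp (c * r ^ 2 / 2) * (∫ u in Ioi r, exp (-(c - ε) * u ^ 2 / 2)) /
      (exp (ε * r ^ 2 / 2) * (ε * r ^ 2 - 2) / r ^ 3)) atTop (𝓝 (1 / (ε * (c - ε)))) := by
  have := (tendsto_mul_exp_mul_integral_Ioi_exp_neg_mul_sq (sub_pos.2 hεc)).mul
    (tendsto_sq_div_mul_sq_sub_two hε)
  rw [div_mul_div_comm, one_mul, mul_comm (c - ε)] at this
  refine this.congr' ?_
  filter_upwards [eventually_gt_atTop 0, eventually_lt_mul_sq hε 2] with r hr hr2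
  have hsplit : exp (c * r ^ 2 / 2) = exp ((c - ε) * r ^ 2 / 2) * exp (ε * r ^ 2 / 2) := by
    rw [← exp_add]; ring_nf
  have : ε * r ^ 2 - 2 ≠ 0 := by linarith
  rw [hsplit]
  field_simp

theorem tendsto_exp_mul_sq_div_two_div_sq_div_psi2 {ε : ℝ} (hε : 0 < ε) :
    Tendsto (fun r => exp (ε * r ^ 2 / 2) / r ^ 2 / psi2 ε r) atTop (𝓝 1) := by
  have : Tendsto (fun r : ℝ => (1 + r⁻¹) * (1 - exp (-ε * r ^ 2 / 2))⁻¹) atTop (𝓝 1) := by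
    simpa using (tendsto_inv_atTop_zero.const_add 1).mul
      (((tendsto_exp_neg_mul_sq_div_two hε).const_sub 1).inv₀ (by norm_num))
  refine this.congr' ?_
  filter_upwards [eventually_gt_atTop 0] with r hr
  have : exp (ε * r ^ 2 / 2) - 1 ≠ 0 := (sub_pos.2 (one_lt_exp_iff.2 (by positivity))).ne'
  rw [psi2, neg_mul, neg_div, exp_neg]
  field_simp
  ring

theorem stmt_2 (c ε : ℝ) (hε : 0 < ε) (hεc : ε < c) :
    Tendsto (fun r : ℝ => psi1 c ε r / psi2 ε r) atTop (nhds (1 / (ε * (c - ε)))) := by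
  have hg : ∀ᶠ r in atTop, 0 < exp (ε * r ^ 2 / 2) * (ε * r ^ 2 - 2) / r ^ 3 := by
    filter_upwards [eventually_gt_atTop 0, eventually_lt_mul_sq hε 2] with r hr hr2
    have : 0 < ε * r ^ 2 - 2 := by linarith
    positivity
  have hpsi1_div : Tendsto (fun r => psi1 c ε r / (exp (ε * r ^ 2 / 2) / r ^ 2)) atTop
      (𝓝 (1 / (ε * (c - ε)))) :=
    lhopital_atTop_of_tendsto_atTop (.of_forall (hasDerivAt_psi1 hεc))
      ((eventually_ne_atTop 0).mono fun r hr => hasDerivAt_exp_mul_sq_div_two_div_sq ε hr)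
      hg (tendsto_exp_mul_sq_div_two_div_sq_atTop hε) (tendsto_deriv_psi1_div_deriv hε hεc)
  have := hpsi1_div.mul (tendsto_exp_mul_sq_div_two_div_sq_div_psi2 hε)
  rw [mul_one] at this
  refine this.congr' ?_
  filter_upwards [eventually_gt_atTop 0] with r hr
  rw [div_mul_div_cancel₀ (by positivity)]
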